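/- arXiv:2404.06656 — 2 statements merged into one kernel-verified Lean document; each statement's English description precedes it below -/
import Mathlib

section
/- If x is a natural number with rev(x) < x whose digit list has length L, then there exists a natural number z with rev(z) < z whose digit list has length L + 2 such that Ball(z) = 10·Ball(x). -/
/-- Digit reversal of a natural number in base 10. -/
def rev (m : ℕ) : ℕ := Nat.ofDigits 10 ((Nat.digits 10 m).reverse)

/-- Reversal of `y` padded with zeros up to length `L`. -/
def revPad (L y : ℕ) : ℕ :=
  Nat.ofDigits 10 ((Nat.digits 10 y ++ List.replicate (L - (Nat.digits 10 y).length) 0).reverse)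

/-- Ball number generated by `x` (meaningful when `rev x < x`). -/
def ball (x : ℕ) : ℕ :=
  (x - rev x) + revPad ((Nat.digits 10 x).length) (x - rev x)

/-- `B` is a Ball magic number. -/
def IsBallMagic (B : ℕ) : Prop := ∃ x : ℕ, rev x < x ∧ ball x = B

lemma ofd_rep (n : ℕ) : Nat.ofDigits 10 (List.replicate n 0) = 0 := by
  induction n with
  | zero => simp [Nat.ofDigits]
  | succ n ih => simp [List.replicate_succ, Nat.ofDigits_cons, ih]

lemma revPad_eq (L y : ℕ) :
    revPad L y = 10 ^ (L - (Nat.digits 10 y).length) * rev y := by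
  unfold revPad rev
  rw [List.reverse_append, List.reverse_replicate, Nat.ofDigits_append, ofd_rep]
  simp

theorem ball_ten_mul (x : ℕ) (h : rev x < x) :
    ∃ z : ℕ, rev z < z ∧
      (Nat.digits 10 z).length = (Nat.digits 10 x).length + 2 ∧
      ball z = 10 * ball x := by
  have hx0 : 0 < x := lt_of_le_of_lt (Nat.zero_le _) h
  set L := (Nat.digits 10 x).length with hL
  have hdz : Nat.digits 10 (Nat.ofDigits 10 (1 :: Nat.digits 10 x ++ [1]))
      = 1 :: Nat.digits 10 x ++ [1] := by
    apply Nat.digits_ofDigits 10 (by norm_num)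
    · intro l hl
      rcases List.mem_cons.1 hl with h1 | h2
      · omega
      rcases List.mem_append.1 h2 with h3 | h4
      · exact Nat.digits_lt_base (by norm_num) h3
      · simp at h4; omega
    · intro hne
      have he : (1 :: Nat.digits 10 x ++ [1]) = (1 :: Nat.digits 10 x) ++ [1] := by simp
      simp only [he, List.getLast_append_singleton]
      omega
  have hz : Nat.ofDigits 10 (1 :: Nat.digits 10 x ++ [1]) = 1 + 10 * x + 10 ^ (L + 1) := by
    simp only [Nat.ofDigits_cons, Nat.ofDigits_append, Nat.ofDigits_digits,
      Nat.ofDigits_singleton, Nat.ofDigits_nil, List.length_cons, ← hL]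
    ring
  have hrevz : rev (Nat.ofDigits 10 (1 :: Nat.digits 10 x ++ [1]))
      = 1 + 10 * rev x + 10 ^ (L + 1) := by
    rw [rev, hdz]
    have hrl : (1 :: Nat.digits 10 x ++ [1]).reverse
        = 1 :: (Nat.digits 10 x).reverse ++ [1] := by simp
    rw [hrl]
    simp only [Nat.ofDigits_cons, Nat.ofDigits_append, Nat.ofDigits_singleton,
      Nat.ofDigits_nil, List.length_reverse, List.length_cons, ← hL]
    rw [show Nat.ofDigits 10 (Nat.digits 10 x).reverse = rev x from rfl]
    ring
  refine ⟨Nat.ofDigits 10 (1 :: Nat.digits 10 x ++ [1]), ?_, ?_, ?_⟩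
  · rw [hrevz, hz]
    have hp : 0 < (10:ℕ) ^ (L + 1) := by positivity
    omega
  · rw [hdz]; simp [hL]
  · set y := x - rev x with hy
    have hy0 : 0 < y := by omega
    have hzy : Nat.ofDigits 10 (1 :: Nat.digits 10 x ++ [1])
        - rev (Nat.ofDigits 10 (1 :: Nat.digits 10 x ++ [1])) = 10 * y := by
      rw [hrevz, hz]; omega
    have hk : (Nat.digits 10 y).length ≤ L := by
      have := Nat.le_digits_len_le 10 y x (by omega)
      omega
    have hd10 : Nat.digits 10 (10 * y) = 0 :: Nat.digits 10 y := by
      rw [Nat.digits_def' (by norm_num : (1:ℕ) < 10) (by positivity)]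
      simp [Nat.mul_div_cancel_left, Nat.mul_mod_right]
    have hrev10 : rev (10 * y) = rev y := by
      rw [rev, hd10, List.reverse_cons, Nat.ofDigits_append]
      simp [rev, Nat.ofDigits]
    have hpad : revPad (L + 2) (10 * y) = 10 * revPad L y := by
      rw [revPad_eq, revPad_eq, hrev10, hd10, List.length_cons]
      have he : L + 2 - ((Nat.digits 10 y).length + 1)
          = (L - (Nat.digits 10 y).length) + 1 := by omega
      rw [he, pow_succ]
      ring
    rw [ball, ball, hdz, hzy]
    have hlen : (1 :: Nat.digits 10 x ++ [1]).length = L + 2 := by simp [hL]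
    rw [hlen, hpad, ← hy, ← hL]
    ring
end

section
/- For every odd integer n > 1, the number N = 2178·uz(n) is a reverse divisor with quotient 4: rev(N) = 4·N. -/
/-- The undulating number `uz n` with `n` digits: `1, 10, 101, 1010, 10101, …`. -/
def uz (n : ℕ) : ℕ :=
  if n % 2 = 0 then 10 * ((100 ^ (n / 2) - 1) / 99) else (100 ^ ((n + 1) / 2) - 1) / 99

lemma ofDigits_replicate_nine (m : ℕ) :
    Nat.ofDigits 10 (List.replicate m 9) = 10 ^ m - 1 := by
  induction m with
  | zero => simp [Nat.ofDigits]
  | succ m ih =>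
    rw [List.replicate_succ, Nat.ofDigits_cons, ih]
    have : 1 ≤ 10 ^ m := Nat.one_le_pow _ _ (by norm_num)
    have : (10:ℕ) ^ (m+1) = 10 * 10 ^ m := by ring
    omega

theorem rev_2178_mul_uz (n : ℕ) (hn : 1 < n) (hodd : Odd n) :
    rev (2178 * uz n) = 4 * (2178 * uz n) := by
  obtain ⟨k, hk⟩ := hodd
  have hk1 : 1 ≤ k := by omega
  have hdvd : (99:ℕ) ∣ 100 ^ (k + 1) - 1 := by
    simpa using Nat.sub_dvd_pow_sub_pow 100 1 (k+1)
  have hpow : (1:ℕ) ≤ 10 ^ (2 * k) := Nat.one_le_pow _ _ (by norm_num)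
  have h100 : (100:ℕ) ^ (k+1) = 100 * 10 ^ (2 * k) := by
    rw [show (100:ℕ) = 10 ^ 2 by norm_num, ← pow_mul, ← pow_add]
    ring_nf
  have huz : uz n = (100 ^ (k + 1) - 1) / 99 := by
    have h1 : n % 2 = 1 := by omega
    have h2 : (n + 1) / 2 = k + 1 := by omega
    simp [uz, h1, h2]
  have hN : 2178 * uz n = 22 * (100 ^ (k + 1) - 1) := by
    rw [huz, show (2178:ℕ) = 22 * 99 by norm_num, mul_assoc,
      Nat.mul_div_cancel' hdvd]
  set L : List ℕ := [8, 7] ++ List.replicate (2 * k) 9 ++ [1, 2] with hL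
  have hof : Nat.ofDigits 10 L = 22 * (100 ^ (k + 1) - 1) := by
    rw [hL, Nat.ofDigits_append, Nat.ofDigits_append, ofDigits_replicate_nine]
    simp [Nat.ofDigits, h100]
    omega
  have hdig : Nat.digits 10 (2178 * uz n) = L := by
    rw [hN, ← hof]
    refine Nat.digits_ofDigits 10 (by norm_num) L ?_ ?_
    · intro l hl
      rw [hL] at hl
      simp at hl
      rcases hl with h | h | h | h | h <;> omega
    · intro h
      have h2 : L.getLast? = some 2 := by
        rw [hL]
        rw [show [8, 7] ++ List.replicate (2 * k) 9 ++ [1, 2]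
            = ([8, 7] ++ List.replicate (2 * k) 9 ++ [1]) ++ [2] by simp,
          List.getLast?_concat]
      rw [List.getLast?_eq_getLast h] at h2
      simp at h2
      omega
  rw [rev, hdig, hL]
  have hrev : ([8, 7] ++ List.replicate (2 * k) 9 ++ [1, 2]).reverse
      = [2, 1] ++ List.replicate (2 * k) 9 ++ [7, 8] := by
    simp [List.reverse_append]
  rw [hrev, Nat.ofDigits_append, Nat.ofDigits_append, ofDigits_replicate_nine, hN]
  simp [Nat.ofDigits, h100]
  omega
end
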